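/- arXiv:2307.03612 — 5 statements merged into one kernel-verified Lean document; each statement's English description precedes it below -/
import Mathlib

section
/- Let z be a point in a real Hilbert space X and let x : [t₀, ∞) → X be a C¹ function with t₀ > 0 and α > 1. If there exists a constant C > 0 such that (1/2)‖x(t) - z + (t/(α-1)) x'(t)‖² ≤ C for all t ≥ t₀, then the trajectory (x(t))_{t ≥ t₀} is bounded. -/
/-!
With `p = α - 1`, the derivative of `t ^ p • (x t - z)` is `p t ^ (p - 1) • (x t - z + (t / p) • x' t)`,
of norm at most `K p t ^ (p - 1)` where `K = √(2C)`. Comparing with the scalar function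
`K t ^ p` gives `t ^ p ‖x t - z‖ ≤ t₀ ^ p ‖x t₀ - z‖ + K (t ^ p - t₀ ^ p)`, hence
`‖x t - z‖ ≤ ‖x t₀ - z‖ + K`.
-/

open Set

section

variable {E : Type*} [NormedAddCommGroup E] [NormedSpace ℝ E]

theorem hasDerivAt_rpow_smul {f : ℝ → E} {f' : E} {p t : ℝ} (hp : p ≠ 0) (ht : 0 < t)
    (hf : HasDerivAt f f' t) :
    HasDerivAt (fun s => s ^ p • f s) ((p * t ^ (p - 1)) • (f t + (t / p) • f')) t := by
  have hpow : p * t ^ (p - 1) * (t / p) = t ^ p := by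
    rw [Real.rpow_sub_one ht.ne']; field_simp
  convert (Real.hasDerivAt_rpow_const (p := p) (Or.inl ht.ne')).smul hf using 1
  · rfl
  · rw [smul_add, smul_smul, hpow, add_comm]

theorem norm_le_of_norm_add_smul_deriv_le {f f' : ℝ → E} {a p K : ℝ} (ha : 0 < a) (hp : 0 < p)
    (hf : ∀ t ∈ Ici a, HasDerivAt f (f' t) t)
    (hbound : ∀ t ∈ Ici a, ‖f t + (t / p) • f' t‖ ≤ K) :
    ∀ t ∈ Ici a, ‖f t‖ ≤ ‖f a‖ + K := by
  intro b hb
  have hpos : ∀ t ∈ Ici a, 0 < t := fun t ht => ha.trans_le ht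
  have hg : ∀ t ∈ Ici a, HasDerivAt (fun s => s ^ p • f s)
      ((p * t ^ (p - 1)) • (f t + (t / p) • f' t)) t :=
    fun t ht => hasDerivAt_rpow_smul hp.ne' (hpos t ht) (hf t ht)
  have hB : ∀ t ∈ Ici a, HasDerivAt (fun s => a ^ p * ‖f a‖ + K * (s ^ p - a ^ p))
      (K * (p * t ^ (p - 1))) t := fun t ht =>
    (((Real.hasDerivAt_rpow_const (Or.inl (hpos t ht).ne')).sub_const _).const_mul K).const_add _
  have hfence : ‖b ^ p • f b‖ ≤ a ^ p * ‖f a‖ + K * (b ^ p - a ^ p) := by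
    refine image_norm_le_of_norm_deriv_right_le_deriv_boundary'
      (fun t ht => (hg t ht.1).continuousAt.continuousWithinAt)
      (fun t ht => (hg t ht.1).hasDerivWithinAt) ?_
      (fun t ht => (hB t ht.1).continuousAt.continuousWithinAt)
      (fun t ht => (hB t ht.1).hasDerivWithinAt) (fun t ht => ?_) ⟨hb, le_rfl⟩
    · simp [norm_smul, abs_of_pos (Real.rpow_pos_of_pos ha p)]
    · have hc : 0 < p * t ^ (p - 1) := mul_pos hp (Real.rpow_pos_of_pos (hpos t ht.1) _)
      rw [norm_smul, Real.norm_of_nonneg hc.le, mul_comm K]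
      exact mul_le_mul_of_nonneg_left (hbound t ht.1) hc.le
  have hbp : 0 < b ^ p := Real.rpow_pos_of_pos (hpos b hb) p
  have hab : a ^ p ≤ b ^ p := Real.rpow_le_rpow ha.le hb hp.le
  have hK : 0 ≤ K := (norm_nonneg _).trans (hbound a (le_refl a))
  rw [norm_smul, Real.norm_of_nonneg hbp.le] at hfence
  refine le_of_mul_le_mul_left ?_ hbp
  calc b ^ p * ‖f b‖ ≤ a ^ p * ‖f a‖ + K * (b ^ p - a ^ p) := hfence
    _ ≤ b ^ p * ‖f a‖ + K * b ^ p := by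
      gcongr
      exact sub_le_self _ (Real.rpow_pos_of_pos ha p).le
    _ = b ^ p * (‖f a‖ + K) := by ring

end

theorem stmt_0_general {X : Type*} [NormedAddCommGroup X] [InnerProductSpace ℝ X]
    (t₀ α C : ℝ) (ht₀ : 0 < t₀) (hα : 1 < α)
    (z : X) (x x' : ℝ → X)
    (hderiv : ∀ t ∈ Ici t₀, HasDerivAt x (x' t) t)
    (hbound : ∀ t ∈ Ici t₀, (1/2) * ‖x t - z + (t/(α-1)) • x' t‖^2 ≤ C) :
    ∃ M : ℝ, ∀ t ∈ Ici t₀, ‖x t‖ ≤ M := by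
  have hnorm : ∀ t ∈ Ici t₀, ‖x t - z + (t / (α - 1)) • x' t‖ ≤ Real.sqrt (2 * C) :=
    fun t ht => Real.le_sqrt_of_sq_le (by linarith [hbound t ht])
  have hdist := norm_le_of_norm_add_smul_deriv_le ht₀ (sub_pos.2 hα)
    (fun t ht => (hderiv t ht).sub_const z) hnorm
  refine ⟨‖z‖ + (‖x t₀ - z‖ + Real.sqrt (2 * C)), fun t ht => ?_⟩
  calc ‖x t‖ = ‖z + (x t - z)‖ := by rw [add_sub_cancel]
    _ ≤ ‖z‖ + ‖x t - z‖ := norm_add_le _ _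
    _ ≤ ‖z‖ + (‖x t₀ - z‖ + Real.sqrt (2 * C)) := by gcongr; exact hdist t ht

theorem stmt_0 {X : Type*} [NormedAddCommGroup X] [InnerProductSpace ℝ X] [CompleteSpace X]
    (t₀ α C : ℝ) (ht₀ : 0 < t₀) (hα : 1 < α) (hC : 0 < C)
    (z : X) (x x' : ℝ → X)
    (hderiv : ∀ t ∈ Ici t₀, HasDerivAt x (x' t) t)
    (hcont : ContinuousOn x' (Ici t₀))
    (hbound : ∀ t ∈ Ici t₀, (1/2) * ‖x t - z + (t/(α-1)) • x' t‖^2 ≤ C) :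
    ∃ M : ℝ, ∀ t ∈ Ici t₀, ‖x t‖ ≤ M :=
  stmt_0_general t₀ α C ht₀ hα z x x' hderiv hbound
end

section
/- Let g : [t₀, ∞) → ℝⁿ be continuous and a : [t₀, ∞) → [0, ∞) be continuous, with t₀ > 0. If there exists a constant C ≥ 0 such that ‖g(t) + ∫_{t₀}^{t} a(s) g(s) ds‖ ≤ C for all t ≥ t₀, then sup_{t ≥ t₀} ‖g(t)‖ < ∞. -/
/-!
With `h t = ∫_{t₀}^t a • g` and `A t = ∫_{t₀}^t a`, the integrating factor `exp A` gives
`(exp A • h)' = (exp A * a) • (g + h)`, whose norm is at most `C * (exp A)'` because `a ≥ 0`.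
Integrating from `t₀`, `exp (A t) * ‖h t‖ ≤ (exp (A t) - 1) * C`, hence `‖h t‖ ≤ C`
and `‖g t‖ ≤ ‖g t + h t‖ + ‖h t‖ ≤ 2 * C`.
-/

open Set Real

variable {E : Type*} [NormedAddCommGroup E] [NormedSpace ℝ E] [CompleteSpace E]

lemma hasDerivAt_exp_integral_smul_integral_smul {a : ℝ → ℝ} {g : ℝ → E}
    (ha : Continuous a) (hg : Continuous g) (t₀ t : ℝ) :
    HasDerivAt (fun u ↦ exp (∫ s in t₀..u, a s) • ∫ s in t₀..u, a s • g s)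
      ((exp (∫ s in t₀..t, a s) * a t) • (g t + ∫ s in t₀..t, a s • g s)) t := by
  have hA := ((ha.integral_hasStrictDerivAt t₀ t).hasDerivAt).exp
  have hh : HasDerivAt (fun u ↦ ∫ s in t₀..u, a s • g s) (a t • g t) t :=
    ((ha.smul hg).integral_hasStrictDerivAt t₀ t).hasDerivAt
  exact (hA.smul hh).congr_deriv (by simp only [smul_add, mul_smul])

lemma norm_integral_smul_le_of_norm_add_integral_smul_le {a : ℝ → ℝ} {g : ℝ → E} {t₀ t C : ℝ}
    (ha : Continuous a) (hg : Continuous g) (ha0 : ∀ s ∈ Icc t₀ t, 0 ≤ a s)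
    (hbound : ∀ s ∈ Icc t₀ t, ‖g s + ∫ r in t₀..s, a r • g r‖ ≤ C) (ht : t₀ ≤ t) :
    ‖∫ s in t₀..t, a s • g s‖ ≤ C := by
  set A : ℝ → ℝ := fun u ↦ ∫ s in t₀..u, a s
  set h : ℝ → E := fun u ↦ ∫ s in t₀..u, a s • g s
  have hAc : Continuous A :=
    intervalIntegral.continuous_primitive (fun _ _ ↦ ha.intervalIntegrable _ _) t₀
  have hhc : Continuous h :=
    intervalIntegral.continuous_primitive (fun _ _ ↦ (ha.smul hg).intervalIntegrable _ _) t₀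
  have hweight : Continuous fun s ↦ exp (A s) * a s := hAc.rexp.mul ha
  have hC : 0 ≤ C := by
    simpa [intervalIntegral.integral_same] using (norm_nonneg _).trans (hbound t₀ ⟨le_rfl, ht⟩)
  have hFTC : exp (A t) • h t = ∫ s in t₀..t, (exp (A s) * a s) • (g s + h s) := by
    rw [intervalIntegral.integral_eq_sub_of_hasDerivAt
      (fun s _ ↦ hasDerivAt_exp_integral_smul_integral_smul ha hg t₀ s)
      ((hweight.smul (hg.add hhc)).intervalIntegrable _ _)]
    simp [A, h]
  have hweight_integral : ∫ s in t₀..t, exp (A s) * a s * C = (exp (A t) - 1) * C := by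
    rw [intervalIntegral.integral_eq_sub_of_hasDerivAt
      (fun s _ ↦ ((ha.integral_hasStrictDerivAt t₀ s).hasDerivAt.exp.mul_const C))
      ((hweight.mul continuous_const).intervalIntegrable _ _)]
    simp only [intervalIntegral.integral_same, exp_zero, one_mul, A]
    ring
  have hmain : exp (A t) * ‖h t‖ ≤ (exp (A t) - 1) * C := by
    calc exp (A t) * ‖h t‖ = ‖exp (A t) • h t‖ := by
          rw [norm_smul, norm_of_nonneg (exp_pos _).le]
      _ ≤ ∫ s in t₀..t, exp (A s) * a s * C := by
          rw [hFTC]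
          refine intervalIntegral.norm_integral_le_of_norm_le ht
            (Filter.Eventually.of_forall fun s hs ↦ ?_)
            ((hweight.mul continuous_const).intervalIntegrable _ _)
          have hs' : s ∈ Icc t₀ t := Ioc_subset_Icc_self hs
          rw [norm_smul, norm_of_nonneg (mul_nonneg (exp_pos _).le (ha0 s hs'))]
          exact mul_le_mul_of_nonneg_left (hbound s hs') (mul_nonneg (exp_pos _).le (ha0 s hs'))
      _ = (exp (A t) - 1) * C := hweight_integral
  nlinarith [exp_pos (A t)]

lemma norm_integral_smul_le_of_continuousOn {a : ℝ → ℝ} {g : ℝ → E} {t₀ t C : ℝ}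
    (ha : ContinuousOn a (Ici t₀)) (hg : ContinuousOn g (Ici t₀)) (ha0 : ∀ s ∈ Ici t₀, 0 ≤ a s)
    (hbound : ∀ s ∈ Ici t₀, ‖g s + ∫ r in t₀..s, a r • g r‖ ≤ C) (ht : t ∈ Ici t₀) :
    ‖∫ s in t₀..t, a s • g s‖ ≤ C := by
  have hproj : Continuous (max t₀) := continuous_const.max continuous_id
  have hproj_mem : ∀ x, max t₀ x ∈ Ici t₀ := fun x ↦ le_max_left t₀ x
  have hproj_eq : ∀ x ∈ Ici t₀, max t₀ x = x := fun x hx ↦ max_eq_right hx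
  have hintegral : ∀ s ∈ Ici t₀,
      ∫ r in t₀..s, a (max t₀ r) • g (max t₀ r) = ∫ r in t₀..s, a r • g r := fun s hs ↦
    intervalIntegral.integral_congr fun r hr ↦ by
      rw [uIcc_of_le hs] at hr
      simp only [hproj_eq r hr.1]
  rw [← hintegral t ht]
  refine norm_integral_smul_le_of_norm_add_integral_smul_le (ha.comp_continuous hproj hproj_mem)
    (hg.comp_continuous hproj hproj_mem) (fun s _ ↦ ha0 _ (hproj_mem s)) (fun s hs ↦ ?_) ht
  simpa only [Function.comp_apply, hintegral s hs.1, hproj_eq s hs.1] using hbound s hs.1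

theorem stmt_1_general (n : ℕ) (t₀ C : ℝ)
    (g : ℝ → EuclideanSpace ℝ (Fin n)) (a : ℝ → ℝ)
    (hg : ContinuousOn g (Ici t₀))
    (ha : ContinuousOn a (Ici t₀)) (ha0 : ∀ t ∈ Ici t₀, 0 ≤ a t)
    (hbound : ∀ t ∈ Ici t₀, ‖g t + ∫ s in t₀..t, a s • g s‖ ≤ C) :
    ∃ M : ℝ, ∀ t ∈ Ici t₀, ‖g t‖ ≤ M :=
  ⟨C + C, fun t ht ↦ (norm_le_add_norm_add _ _).trans
    (add_le_add (hbound t ht) (norm_integral_smul_le_of_continuousOn ha hg ha0 hbound ht))⟩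

theorem stmt_1 (n : ℕ) (t₀ C : ℝ) (ht₀ : 0 < t₀) (hC : 0 ≤ C)
    (g : ℝ → EuclideanSpace ℝ (Fin n)) (a : ℝ → ℝ)
    (hg : ContinuousOn g (Ici t₀))
    (ha : ContinuousOn a (Ici t₀)) (ha0 : ∀ t ∈ Ici t₀, 0 ≤ a t)
    (hbound : ∀ t ∈ Ici t₀, ‖g t + ∫ s in t₀..t, a s • g s‖ ≤ C) :
    ∃ M : ℝ, ∀ t ∈ Ici t₀, ‖g t‖ ≤ M :=
  stmt_1_general n t₀ C g a hg ha ha0 hbound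
end

section
/- Let f : X → ℝ be convex and differentiable with L-Lipschitz gradient on a real Hilbert space X, A : X → Y a continuous linear operator, b ∈ Y, and (x*, λ*) a KKT point, i.e., ∇f(x*) + A*λ* = 0 and Ax* = b. Then for every x ∈ X and every ρ ≥ 0, the augmented Lagrangian L_ρ(x, λ*) − L_ρ(x*, λ*) ≥ (1/(2L)) ‖∇f(x) − ∇f(x*)‖², where L_ρ(x, λ) = f(x) + ⟨λ, Ax − b⟩ + (ρ/2)‖Ax − b‖². -/
/-!
Along the KKT point the multiplier term equals `-⟪∇f x*, x - x*⟫` and the penalty term is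
nonnegative, so the gap `L_ρ(x, λ*) - L_ρ(x*, λ*)` dominates the Bregman divergence
`f x - f x* - ⟪∇f x*, x - x*⟫`. For convex `f` with `L`-Lipschitz gradient that divergence is at
least `‖∇f x - ∇f x*‖² / (2L)`: compare the tangent plane at `x*` with the quadratic upper bound
at `x`, both evaluated at the gradient step `x - L⁻¹ (∇f x - ∇f x*)`.
-/

open RealInnerProductSpace AffineMap

section GradientInequalities

variable {X : Type*} [NormedAddCommGroup X] [InnerProductSpace ℝ X] [CompleteSpace X]

theorem HasGradientAt.hasDerivAt_comp_lineMap {f : X → ℝ} {g x y : X} {t : ℝ}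
    (hf : HasGradientAt f g (lineMap x y t)) :
    HasDerivAt (fun s : ℝ => f (lineMap x y s)) ⟪g, y - x⟫ t :=
  (hasGradientAt_iff_hasFDerivAt.mp hf).comp_hasDerivAt t hasDerivAt_lineMap

theorem ConvexOn.add_inner_le_of_hasGradientAt {s : Set X} {f : X → ℝ} {g x y : X}
    (hf : ConvexOn ℝ s f) (hx : x ∈ s) (hy : y ∈ s) (hg : HasGradientAt f g x) :
    f x + ⟪g, y - x⟫ ≤ f y := by
  have hline : ConvexOn ℝ (lineMap x y ⁻¹' s) (fun t : ℝ => f (lineMap x y t)) :=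
    hf.comp_affineMap _
  have hderiv := HasGradientAt.hasDerivAt_comp_lineMap (y := y) (t := 0) (by simpa using hg)
  have := hline.le_slope_of_hasDerivAt (by simpa) (by simpa) one_pos hderiv
  simp only [slope_def_field, lineMap_apply_one, lineMap_apply_zero] at this
  linarith

theorem sub_sub_inner_le_of_lipschitz_gradient {f : X → ℝ} {f' : X → X} {L : ℝ}
    (hgrad : ∀ x, HasGradientAt f (f' x) x) (hlip : ∀ x y, ‖f' x - f' y‖ ≤ L * ‖x - y‖)
    (x y : X) :
    f y - f x - ⟪f' x, y - x⟫ ≤ L / 2 * ‖y - x‖ ^ 2 := by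
  set φ : ℝ → ℝ := fun t => f (lineMap x y t) - t * ⟪f' x, y - x⟫ - L / 2 * t ^ 2 * ‖y - x‖ ^ 2
  have hφ : ∀ t, HasDerivAt φ
      (⟪f' (lineMap x y t), y - x⟫ - ⟪f' x, y - x⟫ - L * t * ‖y - x‖ ^ 2) t := fun t =>
    ((((hgrad (lineMap x y t)).hasDerivAt_comp_lineMap).sub
      ((hasDerivAt_id' t).mul_const _)).sub
      (((hasDerivAt_pow 2 t).const_mul (L / 2)).mul_const (‖y - x‖ ^ 2))).congr_deriv (by ring)
  have hφ_nonpos : ∀ t ∈ interior (Set.Icc (0 : ℝ) 1),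
      ⟪f' (lineMap x y t), y - x⟫ - ⟪f' x, y - x⟫ - L * t * ‖y - x‖ ^ 2 ≤ 0 := by
    intro t ht
    rw [interior_Icc] at ht
    rw [sub_nonpos]
    have hstep : ‖f' (lineMap x y t) - f' x‖ ≤ L * (t * ‖y - x‖) := by
      simpa [← dist_eq_norm, dist_lineMap_left, abs_of_pos ht.1, dist_comm x y]
        using hlip (lineMap x y t) x
    calc ⟪f' (lineMap x y t), y - x⟫ - ⟪f' x, y - x⟫
        = ⟪f' (lineMap x y t) - f' x, y - x⟫ := (inner_sub_left _ _ _).symm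
      _ ≤ ‖f' (lineMap x y t) - f' x‖ * ‖y - x‖ := real_inner_le_norm _ _
      _ ≤ L * (t * ‖y - x‖) * ‖y - x‖ := by gcongr
      _ = L * t * ‖y - x‖ ^ 2 := by ring
  have hanti : AntitoneOn φ (Set.Icc 0 1) :=
    antitoneOn_of_hasDerivWithinAt_nonpos (convex_Icc 0 1)
      (fun t _ => (hφ t).continuousAt.continuousWithinAt)
      (fun t _ => (hφ t).hasDerivWithinAt) hφ_nonpos
  have := hanti (by simp) (by simp) zero_le_one
  simp only [φ, lineMap_apply_zero, lineMap_apply_one] at this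
  linarith

theorem ConvexOn.sq_norm_sub_gradient_div_le {f : X → ℝ} {f' : X → X} {L : ℝ} (hL : 0 < L)
    (hconv : ConvexOn ℝ Set.univ f) (hgrad : ∀ x, HasGradientAt f (f' x) x)
    (hlip : ∀ x y, ‖f' x - f' y‖ ≤ L * ‖x - y‖) (x y : X) :
    ‖f' y - f' x‖ ^ 2 / (2 * L) ≤ f y - f x - ⟪f' x, y - x⟫ := by
  set d := f' y - f' x
  set p := y - L⁻¹ • d
  have htangent := hconv.add_inner_le_of_hasGradientAt (Set.mem_univ x) (Set.mem_univ p) (hgrad x)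
  have hdescent := sub_sub_inner_le_of_lipschitz_gradient hgrad hlip y p
  have hpx : p - x = (y - x) - L⁻¹ • d := by simp only [p]; abel
  have hpy : p - y = -(L⁻¹ • d) := by simp only [p]; abel
  have hdd : ⟪f' y, d⟫ - ⟪f' x, d⟫ = ‖d‖ ^ 2 := by
    rw [← inner_sub_left, real_inner_self_eq_norm_sq]
  rw [hpx, inner_sub_right, real_inner_smul_right] at htangent
  rw [hpy, inner_neg_right, real_inner_smul_right, norm_neg, norm_smul, mul_pow,
    Real.norm_eq_abs, sq_abs] at hdescent
  have hquad : L / 2 * ((L⁻¹) ^ 2 * ‖d‖ ^ 2) = ‖d‖ ^ 2 / (2 * L) := by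
    field_simp
  have hlin : L⁻¹ * ⟪f' y, d⟫ - L⁻¹ * ⟪f' x, d⟫ = 2 * (‖d‖ ^ 2 / (2 * L)) := by
    rw [← mul_sub, hdd]
    field_simp
  linarith

end GradientInequalities

theorem stmt_3 {X Y : Type*} [NormedAddCommGroup X] [InnerProductSpace ℝ X] [CompleteSpace X]
    [NormedAddCommGroup Y] [InnerProductSpace ℝ Y] [CompleteSpace Y]
    (f : X → ℝ) (f' : X → X) (L : ℝ) (hL : 0 < L)
    (hconv : ConvexOn ℝ Set.univ f)
    (hgrad : ∀ x, HasGradientAt f (f' x) x)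
    (hlip : ∀ x y, ‖f' x - f' y‖ ≤ L * ‖x - y‖)
    (A : X →L[ℝ] Y) (b : Y) (xs : X) (ls : Y)
    (hKKT1 : f' xs + (ContinuousLinearMap.adjoint A) ls = 0)
    (hKKT2 : A xs = b) :
    ∀ (x : X) (ρ : ℝ), 0 ≤ ρ →
      (f x + ⟪ls, A x - b⟫ + (ρ/2) * ‖A x - b‖^2)
        - (f xs + ⟪ls, A xs - b⟫ + (ρ/2) * ‖A xs - b‖^2)
      ≥ (1/(2*L)) * ‖f' x - f' xs‖^2 := by
  intro x ρ hρ
  have hmultiplier : ⟪ls, A x - b⟫ = -⟪f' xs, x - xs⟫ := by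
    rw [← hKKT2, ← map_sub, ← ContinuousLinearMap.adjoint_inner_left,
      eq_neg_of_add_eq_zero_right hKKT1, inner_neg_left]
  have hbregman := hconv.sq_norm_sub_gradient_div_le hL hgrad hlip xs x
  have hpenalty : 0 ≤ ρ / 2 * ‖A x - b‖ ^ 2 := by positivity
  rw [hmultiplier, hKKT2, sub_self, inner_zero_right, norm_zero, one_div_mul_eq_div]
  linarith
end

section
/- Let Φ : X → ℝ be convex, differentiable, and bounded below on a real Hilbert space X with nonempty minimizer set S, and for ε > 0 let x_ε be the unique minimizer of Φ(x) + (ε/2)‖x‖². Then ‖x_ε‖ ≤ ‖x̄*‖ for all ε > 0, where x̄* is the projection of 0 onto S, and x_ε → x̄* strongly as ε → 0. -/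
/-!
Adding `ε/2 ‖·‖²` makes `Φ` `ε`-strongly convex, so comparing the regularized minimizers
`x_δ`, `x_ε` (`δ < ε`) with each other gives
`(ε + δ)/4 ‖x_δ - x_ε‖² ≤ (ε - δ)/2 (‖x_δ‖² - ‖x_ε‖²)`.
Hence `ε ↦ ‖x_ε‖²` is antitone, bounded by `‖x̄*‖²`, and dominates the squared increments of
`x_ε`; its convergence as `ε → 0⁺` makes `x_ε` Cauchy. The limit minimizes `Φ` and has norm at
most `‖x̄*‖`, so it is `x̄*`, the unique minimal norm point of the convex set of minimizers.
-/

open Filter Set Topology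

section StrongConvexity

variable {E : Type*} [NormedAddCommGroup E] [NormedSpace ℝ E] {s : Set E} {m : ℝ} {f : E → ℝ}

lemma StrongConvexOn.add_norm_sub_sq_le_of_isMinOn {x y : E} (hf : StrongConvexOn s m f)
    (hmin : IsMinOn f s x) (hx : x ∈ s) (hy : y ∈ s) :
    f x + m / 4 * ‖x - y‖ ^ 2 ≤ f y := by
  have half : (0 : ℝ) ≤ 1 / 2 := by norm_num
  have halves : (1 / 2 : ℝ) + 1 / 2 = 1 := by norm_num
  have hmid := hf.2 hx hy half half halves
  have hle : f x ≤ f _ := hmin (hf.1 hx hy half half halves)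
  simp only [smul_eq_mul] at hmid
  linarith

end StrongConvexity

section InnerProductSpace

variable {X : Type*} [NormedAddCommGroup X] [InnerProductSpace ℝ X]

lemma ConvexOn.strongConvexOn_add_sq_norm {s : Set X} {f : X → ℝ} (hf : ConvexOn ℝ s f) (m : ℝ) :
    StrongConvexOn s m fun x ↦ f x + m / 2 * ‖x‖ ^ 2 :=
  strongConvexOn_iff_convex.2 (by simpa only [add_sub_cancel_right] using hf)

lemma Convex.eq_of_norm_le_of_forall_norm_le {C : Set X} {a b : X} (hC : Convex ℝ C)
    (ha : a ∈ C) (hb : b ∈ C) (hab : ‖a‖ ≤ ‖b‖) (hmin : ∀ y ∈ C, ‖b‖ ≤ ‖y‖) : a = b := by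
  have hsq : StrictConvexOn ℝ C fun x : X ↦ ‖x‖ ^ 2 :=
    ((strongConvexOn_iff_convex (m := 2)).2
      (by simpa using convexOn_const (0 : ℝ) hC)).strictConvexOn two_pos
  refine hsq.eq_of_isMinOn (fun y hy ↦ ?_) (fun y hy ↦ ?_) ha hb
  · change ‖a‖ ^ 2 ≤ ‖y‖ ^ 2
    gcongr
    exact hab.trans (hmin y hy)
  · change ‖b‖ ^ 2 ≤ ‖y‖ ^ 2
    gcongr
    exact hmin y hy

end InnerProductSpace

lemma ConvexOn.convex_setOf_forall_le {E : Type*} [AddCommGroup E] [Module ℝ E] {f : E → ℝ}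
    (hf : ConvexOn ℝ univ f) : Convex ℝ {y | ∀ z, f y ≤ f z} := by
  intro a ha b hb t u ht hu htu z
  calc f (t • a + u • b) ≤ t • f a + u • f b := hf.2 (mem_univ a) (mem_univ b) ht hu htu
    _ ≤ t • f z + u • f z := by gcongr; exacts [ha z, hb z]
    _ = f z := by rw [← add_smul, htu, one_smul]

lemma cauchy_map_of_sq_dist_le {ι α β : Type*} [PseudoMetricSpace α] [PseudoMetricSpace β]
    {l : Filter ι} [l.NeBot] {u : ι → α} {g : ι → β} {C : ℝ} (hg : Cauchy (map g l))
    (h : ∀ᶠ p in l ×ˢ l, dist (u p.1) (u p.2) ^ 2 ≤ C * dist (g p.1) (g p.2)) :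
    Cauchy (map u l) := by
  rw [cauchy_map_iff', tendsto_uniformity_iff_dist_tendsto_zero] at hg ⊢
  have hbound : Tendsto (fun p : ι × ι ↦ √(C * dist (g p.1) (g p.2))) (l ×ˢ l) (𝓝 0) := by
    simpa using ((hg.const_mul C).sqrt)
  refine squeeze_zero' (Eventually.of_forall fun _ ↦ dist_nonneg) ?_ hbound
  filter_upwards [h] with p hp
  exact Real.le_sqrt_of_sq_le hp

section Tikhonov

variable {X : Type*} [NormedAddCommGroup X] {Φ : X → ℝ}

noncomputable def tikhonov (Φ : X → ℝ) (ε : ℝ) (y : X) : ℝ := Φ y + ε / 2 * ‖y‖ ^ 2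

lemma norm_le_of_isMinOn_tikhonov {ε : ℝ} {x xbar : X} (hε : 0 < ε)
    (hx : IsMinOn (tikhonov Φ ε) univ x) (hxbar : IsMinOn Φ univ xbar) : ‖x‖ ≤ ‖xbar‖ := by
  have hreg : Φ x + ε / 2 * ‖x‖ ^ 2 ≤ Φ xbar + ε / 2 * ‖xbar‖ ^ 2 := hx (mem_univ xbar)
  have hΦ : Φ xbar ≤ Φ x := hxbar (mem_univ x)
  have hsq : ‖x‖ ^ 2 ≤ ‖xbar‖ ^ 2 := le_of_mul_le_mul_left (by linarith) (half_pos hε)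
  exact (pow_le_pow_iff_left₀ (norm_nonneg _) (norm_nonneg _) two_ne_zero).1 hsq

lemma isMinOn_of_tendsto_tikhonov (hΦ : Continuous Φ) {x : ℝ → X} {xstar : X}
    (hx : ∀ ε, 0 < ε → IsMinOn (tikhonov Φ ε) univ (x ε))
    (hlim : Tendsto x (𝓝[>] 0) (𝓝 xstar)) : IsMinOn Φ univ xstar := by
  intro z _
  have hreg : Tendsto (tikhonov Φ · z) (𝓝[>] 0) (𝓝 (Φ z)) := by
    have hcont : Continuous (tikhonov Φ · z) := by unfold tikhonov; fun_prop
    simpa [tikhonov] using (hcont.tendsto 0).mono_left nhdsWithin_le_nhds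
  refine le_of_tendsto_of_tendsto ((hΦ.tendsto xstar).comp hlim) hreg ?_
  filter_upwards [self_mem_nhdsWithin] with ε (hε : 0 < ε)
  have : Φ (x ε) + ε / 2 * ‖x ε‖ ^ 2 ≤ tikhonov Φ ε z := hx ε hε (mem_univ z)
  have : 0 ≤ ε / 2 * ‖x ε‖ ^ 2 := by positivity
  simp only [Function.comp_apply]
  linarith

variable [InnerProductSpace ℝ X]

lemma tikhonov_estimate (hΦ : ConvexOn ℝ univ Φ) {ε δ : ℝ} {x y : X}
    (hx : IsMinOn (tikhonov Φ ε) univ x) (hy : IsMinOn (tikhonov Φ δ) univ y) :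
    (ε + δ) / 4 * ‖x - y‖ ^ 2 ≤ (ε - δ) / 2 * (‖y‖ ^ 2 - ‖x‖ ^ 2) := by
  have hxy := (hΦ.strongConvexOn_add_sq_norm ε).add_norm_sub_sq_le_of_isMinOn hx
    (mem_univ x) (mem_univ y)
  have hyx := (hΦ.strongConvexOn_add_sq_norm δ).add_norm_sub_sq_le_of_isMinOn hy
    (mem_univ y) (mem_univ x)
  rw [norm_sub_rev] at hyx
  linarith

lemma sq_norm_le_of_tikhonov (hΦ : ConvexOn ℝ univ Φ) {ε δ : ℝ} {x y : X} (hδ : 0 < δ)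
    (hδε : δ < ε) (hx : IsMinOn (tikhonov Φ ε) univ x) (hy : IsMinOn (tikhonov Φ δ) univ y) :
    ‖x‖ ^ 2 ≤ ‖y‖ ^ 2 := by
  have h := tikhonov_estimate hΦ hx hy
  have : 0 ≤ (ε - δ) / 2 * (‖y‖ ^ 2 - ‖x‖ ^ 2) :=
    le_trans (mul_nonneg (by linarith) (sq_nonneg _)) h
  exact sub_nonneg.1 (nonneg_of_mul_nonneg_right this (by linarith))

lemma sq_norm_sub_le_of_tikhonov (hΦ : ConvexOn ℝ univ Φ) {ε δ : ℝ} {x y : X} (hε : 0 < ε)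
    (hδ : 0 < δ) (hx : IsMinOn (tikhonov Φ ε) univ x) (hy : IsMinOn (tikhonov Φ δ) univ y) :
    ‖x - y‖ ^ 2 ≤ 2 * |‖x‖ ^ 2 - ‖y‖ ^ 2| := by
  have hεδ : |ε - δ| ≤ ε + δ := abs_le.2 ⟨by linarith, by linarith⟩
  refine le_of_mul_le_mul_left ?_ (by positivity : 0 < (ε + δ) / 4)
  calc (ε + δ) / 4 * ‖x - y‖ ^ 2 ≤ (ε - δ) / 2 * (‖y‖ ^ 2 - ‖x‖ ^ 2) :=
        tikhonov_estimate hΦ hx hy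
    _ ≤ |ε - δ| / 2 * |‖x‖ ^ 2 - ‖y‖ ^ 2| := by
        refine (le_abs_self _).trans_eq ?_
        rw [abs_mul, abs_div, abs_two, abs_sub_comm (‖y‖ ^ 2)]
    _ ≤ (ε + δ) / 2 * |‖x‖ ^ 2 - ‖y‖ ^ 2| := by gcongr
    _ = (ε + δ) / 4 * (2 * |‖x‖ ^ 2 - ‖y‖ ^ 2|) := by ring

variable [CompleteSpace X]

lemma exists_tendsto_tikhonov (hΦ : ConvexOn ℝ univ Φ) {x : ℝ → X} {xbar : X}
    (hx : ∀ ε, 0 < ε → IsMinOn (tikhonov Φ ε) univ (x ε)) (hxbar : IsMinOn Φ univ xbar) :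
    ∃ xstar, Tendsto x (𝓝[>] 0) (𝓝 xstar) := by
  have hanti : AntitoneOn (fun ε ↦ ‖x ε‖ ^ 2) (Ioi 0) := by
    intro δ hδ ε hε hδε
    rcases hδε.eq_or_lt with rfl | hlt
    · rfl
    · exact sq_norm_le_of_tikhonov hΦ hδ hlt (hx ε hε) (hx δ hδ)
  have hbdd : BddAbove ((fun ε ↦ ‖x ε‖ ^ 2) '' Ioi 0) := by
    refine ⟨‖xbar‖ ^ 2, ?_⟩
    rintro _ ⟨ε, hε, rfl⟩
    have := norm_le_of_isMinOn_tikhonov hε (hx ε hε) hxbar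
    dsimp only
    gcongr
  refine cauchy_map_iff_exists_tendsto.1 <|
    cauchy_map_of_sq_dist_le (C := 2) (hanti.tendsto_nhdsGT hbdd).cauchy_map ?_
  filter_upwards [prod_mem_prod self_mem_nhdsWithin self_mem_nhdsWithin] with p hp
  rw [dist_eq_norm, Real.dist_eq]
  exact sq_norm_sub_le_of_tikhonov hΦ hp.1 hp.2 (hx _ hp.1) (hx _ hp.2)

end Tikhonov

theorem stmt_7_general {X : Type*} [NormedAddCommGroup X] [InnerProductSpace ℝ X] [CompleteSpace X]
    (Φ : X → ℝ) (hconv : ConvexOn ℝ Set.univ Φ) (hcont : Continuous Φ)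
    (S : Set X) (hS : S = {y : X | ∀ z : X, Φ y ≤ Φ z})
    (xbar : X) (hxbarS : xbar ∈ S) (hxbarmin : ∀ y ∈ S, ‖xbar‖ ≤ ‖y‖)
    (xε : ℝ → X)
    (hxε : ∀ ε : ℝ, 0 < ε → ∀ y : X,
      Φ (xε ε) + (ε/2) * ‖xε ε‖^2 ≤ Φ y + (ε/2) * ‖y‖^2) :
    (∀ ε : ℝ, 0 < ε → ‖xε ε‖ ≤ ‖xbar‖) ∧
    Tendsto xε (nhdsWithin 0 (Ioi 0)) (nhds xbar) := by
  subst hS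
  have hxbar : IsMinOn Φ univ xbar := isMinOn_univ_iff.2 hxbarS
  have hx : ∀ ε, 0 < ε → IsMinOn (tikhonov Φ ε) univ (xε ε) :=
    fun ε hε ↦ isMinOn_univ_iff.2 (hxε ε hε)
  have hbound : ∀ ε, 0 < ε → ‖xε ε‖ ≤ ‖xbar‖ :=
    fun ε hε ↦ norm_le_of_isMinOn_tikhonov hε (hx ε hε) hxbar
  obtain ⟨xstar, hlim⟩ := exists_tendsto_tikhonov hconv hx hxbar
  have hxstar : IsMinOn Φ univ xstar := isMinOn_of_tendsto_tikhonov hcont hx hlim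
  have hnorm : ‖xstar‖ ≤ ‖xbar‖ :=
    le_of_tendsto hlim.norm (eventually_nhdsWithin_of_forall hbound)
  have hxstar_eq : xstar = xbar := hconv.convex_setOf_forall_le.eq_of_norm_le_of_forall_norm_le
    (isMinOn_univ_iff.1 hxstar) hxbarS hnorm hxbarmin
  exact ⟨hbound, hxstar_eq ▸ hlim⟩

theorem stmt_7 {X : Type*} [NormedAddCommGroup X] [InnerProductSpace ℝ X] [CompleteSpace X]
    (Φ : X → ℝ) (hconv : ConvexOn ℝ Set.univ Φ) (hcont : Continuous Φ)
    (S : Set X) (hS : S = {y : X | ∀ z : X, Φ y ≤ Φ z}) (hSne : S.Nonempty)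
    (xbar : X) (hxbarS : xbar ∈ S) (hxbarmin : ∀ y ∈ S, ‖xbar‖ ≤ ‖y‖)
    (xε : ℝ → X)
    (hxε : ∀ ε : ℝ, 0 < ε → ∀ y : X,
      Φ (xε ε) + (ε/2) * ‖xε ε‖^2 ≤ Φ y + (ε/2) * ‖y‖^2) :
    (∀ ε : ℝ, 0 < ε → ‖xε ε‖ ≤ ‖xbar‖) ∧
    Tendsto xε (nhdsWithin 0 (Ioi 0)) (nhds xbar) :=
  stmt_7_general Φ hconv hcont S hS xbar hxbarS hxbarmin xε hxε
end

section
/- Let Φ : X → ℝ be convex lower semicontinuous on a real Hilbert space, with minimizer x*. Suppose x : [t₀, ∞) → X satisfies Φ(x(t)) → Φ(x*) as t → ∞ and ‖x(t)‖ < ‖x̄*‖ for all t ≥ T (for some T), where x̄* is the minimal norm element of argmin Φ. Then x(t) converges strongly to x̄* as t → ∞, provided every weak sequential cluster point of (x(t)) along sequences t_n → ∞ lies in argmin Φ. -/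
open Filter Set RealInnerProductSpace

/-!
Let `K n = {y | Φ y ≤ Φ x̄ + 1 / (n + 1)}`: closed convex sets decreasing to `{y | Φ y ≤ Φ x̄}`,
on which `x̄` has minimal norm. By the parallelogram law the points `v n` of minimal norm in `K n`
form a Cauchy sequence; its limit lies in every `K n`, hence `‖v n‖ ↑ ‖x̄‖`. Again by the
parallelogram law, every `u ∈ K n` with `‖u‖ ≤ ‖x̄‖` satisfies `‖u - x̄‖² ≤ 4 (‖x̄‖² - ‖v n‖²)`,
and `x t` is eventually such a point for every `n`.
-/

open Topology

section MinimalNorm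

variable {X : Type*} [NormedAddCommGroup X] [InnerProductSpace ℝ X]

theorem exists_isMinOn_norm_of_isClosed_of_convex [CompleteSpace X] {K : Set X}
    (hne : K.Nonempty) (hclosed : IsClosed K) (hconv : Convex ℝ K) :
    ∃ v ∈ K, IsMinOn (‖·‖) K v := by
  obtain ⟨v, hvK, hv⟩ := exists_norm_eq_iInf_of_complete_convex hne hclosed.isComplete hconv 0
  refine ⟨v, hvK, isMinOn_iff.2 fun w hw => ?_⟩
  have hbdd : BddBelow (range fun w : K => ‖(0 : X) - w‖) :=
    ⟨0, forall_mem_range.2 fun _ => norm_nonneg _⟩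
  simpa [zero_sub, norm_neg] using hv.trans_le (ciInf_le hbdd ⟨w, hw⟩)

theorem norm_sub_sq_le_of_isMinOn_norm {C : Set X} (hC : Convex ℝ C) {v : X}
    (hv : IsMinOn (‖·‖) C v) {u w : X} (hu : u ∈ C) (hw : w ∈ C) :
    ‖u - w‖ ^ 2 ≤ 2 * ‖u‖ ^ 2 + 2 * ‖w‖ ^ 2 - 4 * ‖v‖ ^ 2 := by
  have hmid : ‖v‖ ≤ ‖(1 / 2 : ℝ) • (u + w)‖ := by
    rw [smul_add]
    exact isMinOn_iff.1 hv _ (hC hu hw (by norm_num) (by norm_num) (by norm_num))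
  rw [norm_smul, Real.norm_of_nonneg (by norm_num)] at hmid
  have hpar := parallelogram_law_with_norm ℝ u w
  nlinarith [norm_nonneg v]

variable {K : ℕ → Set X} {v : ℕ → X}

theorem cauchySeq_of_isMinOn_norm_of_antitone (hK : Antitone K) (hconv : ∀ n, Convex ℝ (K n))
    (hvK : ∀ n, v n ∈ K n) (hv : ∀ n, IsMinOn (‖·‖) (K n) (v n))
    (hbdd : BddAbove (range fun n => ‖v n‖)) : CauchySeq v := by
  have hmono : Monotone fun n => ‖v n‖ := fun n m hnm => isMinOn_iff.1 (hv n) _ (hK hnm (hvK m))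
  set R := ⨆ n, ‖v n‖
  have hR : Tendsto (fun n => ‖v n‖) atTop (𝓝 R) := tendsto_atTop_ciSup hmono hbdd
  have hle : ∀ n, ‖v n‖ ≤ R := le_ciSup hbdd
  refine cauchySeq_of_le_tendsto_0 (fun N => √(4 * R ^ 2 - 4 * ‖v N‖ ^ 2)) ?_ ?_
  · intro n m N hn hm
    rw [dist_eq_norm, ← Real.sqrt_sq (norm_nonneg _)]
    gcongr
    have := norm_sub_sq_le_of_isMinOn_norm (hconv N) (hv N) (hK hn (hvK n)) (hK hm (hvK m))
    nlinarith [hle n, hle m, norm_nonneg (v n), norm_nonneg (v m)]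
  · have hgap := (((hR.pow 2).const_mul 4).const_sub (4 * R ^ 2)).sqrt
    simpa using hgap

theorem tendsto_norm_of_isMinOn_norm_of_antitone [CompleteSpace X] (hK : Antitone K)
    (hconv : ∀ n, Convex ℝ (K n)) (hclosed : ∀ n, IsClosed (K n))
    (hvK : ∀ n, v n ∈ K n) (hv : ∀ n, IsMinOn (‖·‖) (K n) (v n))
    {a : X} (haK : ∀ n, a ∈ K n) (ha : IsMinOn (‖·‖) (⋂ n, K n) a) :
    Tendsto (fun n => ‖v n‖) atTop (𝓝 ‖a‖) := by
  have hva : ∀ n, ‖v n‖ ≤ ‖a‖ := fun n => isMinOn_iff.1 (hv n) a (haK n)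
  obtain ⟨p, hp⟩ := cauchySeq_tendsto_of_complete <| cauchySeq_of_isMinOn_norm_of_antitone hK hconv
    hvK hv ⟨‖a‖, forall_mem_range.2 hva⟩
  have hpK : p ∈ ⋂ n, K n := mem_iInter.2 fun n => (hclosed n).mem_of_tendsto hp <|
    (eventually_ge_atTop n).mono fun m hm => hK hm (hvK m)
  have hpa : ‖p‖ = ‖a‖ := le_antisymm (le_of_tendsto' hp.norm hva) (isMinOn_iff.1 ha p hpK)
  exact hpa ▸ hp.norm

theorem exists_forall_norm_le_imp_dist_lt_of_antitone [CompleteSpace X] (hK : Antitone K)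
    (hconv : ∀ n, Convex ℝ (K n)) (hclosed : ∀ n, IsClosed (K n))
    {a : X} (haK : ∀ n, a ∈ K n) (ha : IsMinOn (‖·‖) (⋂ n, K n) a) {ε : ℝ} (hε : 0 < ε) :
    ∃ n, ∀ u ∈ K n, ‖u‖ ≤ ‖a‖ → dist u a < ε := by
  choose v hvK hv using fun n =>
    exists_isMinOn_norm_of_isClosed_of_convex ⟨a, haK n⟩ (hclosed n) (hconv n)
  have hgap : Tendsto (fun n => 4 * ‖a‖ ^ 2 - 4 * ‖v n‖ ^ 2) atTop (𝓝 0) := by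
    have hlim := tendsto_norm_of_isMinOn_norm_of_antitone hK hconv hclosed hvK hv haK ha
    have hgap := ((hlim.pow 2).const_mul 4).const_sub (4 * ‖a‖ ^ 2)
    simpa using hgap
  obtain ⟨n, hn⟩ := (hgap.eventually (gt_mem_nhds (pow_pos hε 2))).exists
  refine ⟨n, fun u hu hua => ?_⟩
  have := norm_sub_sq_le_of_isMinOn_norm (hconv n) (hv n) hu (haK n)
  rw [dist_eq_norm]
  exact lt_of_pow_lt_pow_left₀ 2 hε.le (by nlinarith [norm_nonneg u])

end MinimalNorm

theorem ConvexOn.tendsto_of_tendsto_of_eventually_norm_le {X : Type*} [NormedAddCommGroup X]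
    [InnerProductSpace ℝ X] [CompleteSpace X] {Φ : X → ℝ} (hconv : ConvexOn ℝ univ Φ)
    (hlsc : LowerSemicontinuous Φ) {a : X} (ha : IsMinOn (‖·‖) {y | Φ y ≤ Φ a} a)
    {α : Type*} {l : Filter α} {f : α → X} (hΦ : Tendsto (fun i => Φ (f i)) l (𝓝 (Φ a)))
    (hnorm : ∀ᶠ i in l, ‖f i‖ ≤ ‖a‖) : Tendsto f l (𝓝 a) := by
  set K : ℕ → Set X := fun n => Φ ⁻¹' Iic (Φ a + 1 / (n + 1))
  have hK : Antitone K := fun n m hnm =>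
    preimage_mono <| Iic_subset_Iic.2 <| add_le_add_right (Nat.one_div_le_one_div hnm) _
  have hconvK : ∀ n, Convex ℝ (K n) := fun n => by
    simpa [K, preimage, Iic] using hconv.convex_le (Φ a + 1 / (n + 1))
  have hclosed : ∀ n, IsClosed (K n) := fun n => hlsc.isClosed_preimage _
  have haK : ∀ n, a ∈ K n := fun n =>
    show Φ a ≤ _ from le_add_of_nonneg_right Nat.one_div_pos_of_nat.le
  have hiInter : ⋂ n, K n ⊆ {y | Φ y ≤ Φ a} := fun y hy => by
    have hyK : ∀ n : ℕ, Φ y ≤ Φ a + 1 / (n + 1) := mem_iInter.1 hy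
    simpa using ge_of_tendsto' (tendsto_one_div_add_atTop_nhds_zero_nat.const_add (Φ a)) hyK
  rw [Metric.tendsto_nhds]
  intro ε hε
  obtain ⟨n, hn⟩ := exists_forall_norm_le_imp_dist_lt_of_antitone hK hconvK hclosed haK
    (ha.on_subset hiInter) hε
  filter_upwards [hΦ.eventually (gt_mem_nhds (lt_add_of_pos_right (Φ a) Nat.one_div_pos_of_nat)),
    hnorm] with i hΦi hi
  exact hn (f i) hΦi.le hi

theorem stmt_14_general {X : Type*} [NormedAddCommGroup X] [InnerProductSpace ℝ X] [CompleteSpace X]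
    (Φ : X → ℝ) (hconv : ConvexOn ℝ Set.univ Φ)
    (hlsc : LowerSemicontinuous Φ)
    (S : Set X) (hS : S = {y : X | ∀ z : X, Φ y ≤ Φ z})
    (xbar : X) (hxbarS : xbar ∈ S) (hxbarmin : ∀ y ∈ S, ‖xbar‖ ≤ ‖y‖)
    (T : ℝ) (x : ℝ → X)
    (hΦlim : Tendsto (fun t => Φ (x t)) atTop (nhds (Φ xbar)))
    (hnorm : ∀ t ∈ Ici T, ‖x t‖ < ‖xbar‖) :
    Tendsto x atTop (nhds xbar) := by
  subst hS
  refine hconv.tendsto_of_tendsto_of_eventually_norm_le hlsc ?_ hΦlim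
    ((eventually_ge_atTop T).mono fun t ht => (hnorm t ht).le)
  exact isMinOn_iff.2 fun y hy => hxbarmin y fun z => le_trans hy (hxbarS z)

theorem stmt_14 {X : Type*} [NormedAddCommGroup X] [InnerProductSpace ℝ X] [CompleteSpace X]
    (Φ : X → ℝ) (hconv : ConvexOn ℝ Set.univ Φ)
    (hlsc : LowerSemicontinuous Φ)
    (S : Set X) (hS : S = {y : X | ∀ z : X, Φ y ≤ Φ z}) (hSne : S.Nonempty)
    (xbar : X) (hxbarS : xbar ∈ S) (hxbarmin : ∀ y ∈ S, ‖xbar‖ ≤ ‖y‖)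
    (t₀ T : ℝ) (x : ℝ → X)
    (hΦlim : Tendsto (fun t => Φ (x t)) atTop (nhds (Φ xbar)))
    (hnorm : ∀ t ∈ Ici T, ‖x t‖ < ‖xbar‖)
    (hcluster : ∀ (tn : ℕ → ℝ), Tendsto tn atTop atTop →
      ∀ p : X, (∀ y : X, Tendsto (fun n => ⟪y, x (tn n)⟫) atTop (nhds ⟪y, p⟫)) →
        p ∈ S) :
    Tendsto x atTop (nhds xbar) :=
  stmt_14_general Φ hconv hlsc S hS xbar hxbarS hxbarmin T x hΦlim hnorm
end
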